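/- arXiv:2407.14444 — 4 statements merged into one kernel-verified Lean document; each statement's English description precedes it below -/
import Mathlib

section
/- Let p ≥ 1 and let f : ℝ → ℂ be almost periodic. (i) If there exists c ∈ ℂ such that f(t) → c as t → +∞, then f(t) = c for all t ∈ ℝ. (ii) If ∫_0^∞ |f(t)|^p dt < ∞, then f(t) = 0 for all t ∈ ℝ. -/
open MeasureTheory Filter Topology
open scoped ENNReal NNReal

noncomputable section

/-- Bochner-almost periodic function `ℝ → ℂ`. -/
def AP (f : ℝ → ℂ) : Prop :=
  Continuous f ∧ ∀ b : ℕ → ℝ, ∃ φ : ℕ → ℕ, StrictMono φ ∧ ∃ g : ℝ → ℂ,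
    TendstoUniformly (fun m t => f (t + b (φ m))) g atTop

/-- Bounded continuous. -/
def BCb (f : ℝ → ℂ) : Prop := Continuous f ∧ ∃ C : ℝ, ∀ t, ‖f t‖ ≤ C

def BC0 (f : ℝ → ℂ) : Prop := BCb f ∧ Tendsto f atTop (nhds 0)

def C00 (f : ℝ → ℂ) : Prop := BC0 f ∧ Tendsto f atBot (nhds 0)

def Lp0 (p : ℝ) (f : ℝ → ℂ) : Prop :=
  (∃ C : ℝ, ∀ t ≤ (0:ℝ), ‖f t‖ ≤ C) ∧ (∫⁻ t in Set.Ioi (0:ℝ), (‖f t‖₊ : ℝ≥0∞) ^ p) < ⊤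

def LpR (p : ℝ) (f : ℝ → ℂ) : Prop := (∫⁻ t : ℝ, (‖f t‖₊ : ℝ≥0∞) ^ p) < ⊤

def AAP (f : ℝ → ℂ) : Prop :=
  BCb f ∧ ∃ φ g : ℝ → ℂ, (∀ t, f t = φ t + g t) ∧ AP φ ∧ Tendsto g atTop (nhds 0)

def AAP0 (f : ℝ → ℂ) : Prop :=
  BCb f ∧ ∃ φ g : ℝ → ℂ, (∀ t, f t = φ t + g t) ∧ AP φ ∧
    Tendsto g atTop (nhds 0) ∧ Tendsto g atBot (nhds 0)

def APp (p : ℝ) (f : ℝ → ℂ) : Prop :=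
  BCb f ∧ ∃ φ g : ℝ → ℂ, (∀ t, f t = φ t + g t) ∧ AP φ ∧ Lp0 p g

def APp0 (p : ℝ) (f : ℝ → ℂ) : Prop :=
  BCb f ∧ ∃ φ g : ℝ → ℂ, (∀ t, f t = φ t + g t) ∧ AP φ ∧ LpR p g

/-- The Green kernel `g_ω`. -/
def gker (ω : ℂ) (t s : ℝ) : ℂ :=
  if Real.sign ω.re * (t - s) < 0
  then ((-Real.sign ω.re : ℝ) : ℂ) * Complex.exp (ω * ((t - s : ℝ) : ℂ)) else 0

/-- The Green operator `G_ω`. -/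
def Gop (ω : ℂ) (f : ℝ → ℂ) (t : ℝ) : ℂ := ∫ s : ℝ, gker ω t s * f s

/-- The absolute Green operator `I_ω`, with values in `[0,∞]`. -/
def Iop (ω : ℂ) (f : ℝ → ℂ) (t : ℝ) : ℝ≥0∞ := ∫⁻ s : ℝ, (‖gker ω t s * f s‖₊ : ℝ≥0∞)

def Gam {m : ℕ} (γ : Fin m → ℂ) (j : Fin m) : ℂ := ∏ k ∈ Finset.univ.erase j, (γ j - γ k)

/-- The Green operator for the family γ. -/
def GreenOp {m : ℕ} (γ : Fin m → ℂ) (f : ℝ → ℂ) (t : ℝ) : ℂ :=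
  ∑ j, (Gam γ j)⁻¹ * Gop (γ j) f t

def Dpoly {m : ℕ} (γ : Fin m → ℂ) : Polynomial ℂ := ∏ j, (Polynomial.X - Polynomial.C (γ j))

/-- The differential operator with characteristic polynomial `∏ (x - γ j)`. -/
def Dop {m : ℕ} (γ : Fin m → ℂ) (z : ℝ → ℂ) (t : ℝ) : ℂ :=
  ∑ k ∈ Finset.range (m + 1), (Dpoly γ).coeff k * iteratedDeriv k z t

def APm (m : ℕ) (F : ℝ → (Fin m → ℂ) → ℂ) : Prop :=
  Continuous (fun p : ℝ × (Fin m → ℂ) => F p.1 p.2) ∧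
  ∀ b : ℕ → ℝ, ∃ φ : ℕ → ℕ, StrictMono φ ∧ ∃ G : ℝ → (Fin m → ℂ) → ℂ,
    ∀ K : Set (Fin m → ℂ), IsCompact K →
      TendstoUniformlyOn (fun k (p : ℝ × (Fin m → ℂ)) => F (p.1 + b (φ k)) p.2)
        (fun p => G p.1 p.2) atTop (Set.univ ×ˢ K)

def DecayTop (m : ℕ) (h : ℝ → (Fin m → ℂ) → ℂ) : Prop :=
  ∀ K : Set (Fin m → ℂ), IsCompact K →
    TendstoUniformlyOn (fun t x => h t x) 0 atTop K

def DecayBot (m : ℕ) (h : ℝ → (Fin m → ℂ) → ℂ) : Prop :=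
  ∀ K : Set (Fin m → ℂ), IsCompact K →
    TendstoUniformlyOn (fun t x => h t x) 0 atBot K

def AAPm (m : ℕ) (F : ℝ → (Fin m → ℂ) → ℂ) : Prop :=
  Continuous (fun p : ℝ × (Fin m → ℂ) => F p.1 p.2) ∧ (∃ C : ℝ, ∀ t x, ‖F t x‖ ≤ C) ∧
  ∃ Φ h : ℝ → (Fin m → ℂ) → ℂ, (∀ t x, F t x = Φ t x + h t x) ∧ APm m Φ ∧ DecayTop m h

def AAP0m (m : ℕ) (F : ℝ → (Fin m → ℂ) → ℂ) : Prop :=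
  Continuous (fun p : ℝ × (Fin m → ℂ) => F p.1 p.2) ∧ (∃ C : ℝ, ∀ t x, ‖F t x‖ ≤ C) ∧
  ∃ Φ h : ℝ → (Fin m → ℂ) → ℂ, (∀ t x, F t x = Φ t x + h t x) ∧ APm m Φ ∧
    DecayTop m h ∧ DecayBot m h

/-- Complete Bell polynomials. -/
def Bell : ℕ → (ℕ → ℂ) → ℂ
  | 0, _ => 1
  | (i+1), x => ∑ j ∈ Finset.range (i+1), (Nat.choose i j : ℂ) * Bell (i - j) x * x (j+1)
decreasing_by exact Nat.lt_succ_of_le (Nat.sub_le i j)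

/-- `f_i(x_1,…,x_i) = B_{i+1}(x_1,…,x_i,0)`. -/
def fBell (i : ℕ) (x : ℕ → ℂ) : ℂ := Bell (i+1) (fun k => if k = i+1 then 0 else x k)

def Pa (n : ℕ) (a : ℕ → ℂ) : Polynomial ℂ :=
  Polynomial.X ^ n + ∑ i ∈ Finset.range n, Polynomial.C (a i) * Polynomial.X ^ i

def Prl (n : ℕ) (r : ℕ → ℝ → ℂ) (lam : ℂ) (t : ℝ) : ℂ :=
  ∑ k ∈ Finset.range n, lam ^ k * r k t

/-- `(d^k/dλ^k) P(r(t);λ)`. -/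
def PrlD (n k : ℕ) (r : ℕ → ℝ → ℂ) (lam : ℂ) (t : ℝ) : ℂ :=
  (Nat.factorial k : ℂ) * ∑ i ∈ Finset.range n, (Nat.choose i k : ℂ) * lam ^ (i - k) * r i t

def DopP (n : ℕ) (a : ℕ → ℂ) (lam : ℂ) (z : ℝ → ℂ) (t : ℝ) : ℂ :=
  ∑ j ∈ Finset.Icc 1 n, ((Nat.factorial j : ℂ))⁻¹ *
    Polynomial.eval lam (Polynomial.derivative^[j] (Pa n a)) * iteratedDeriv (j-1) z t

def Lterm (n : ℕ) (r : ℕ → ℝ → ℂ) (lam : ℂ) (z : ℝ → ℂ) (t : ℝ) : ℂ :=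
  ∑ k ∈ Finset.Icc 1 (n-1), ((Nat.factorial k : ℂ))⁻¹ * PrlD n k r lam t * iteratedDeriv (k-1) z t

def Fterm (n : ℕ) (a : ℕ → ℂ) (r : ℕ → ℝ → ℂ) (lam : ℂ) (z : ℝ → ℂ) (t : ℝ) : ℂ :=
  ∑ i ∈ Finset.Icc 2 n, ∑ j ∈ Finset.range (n - i + 1),
    (Nat.choose (i+j) j : ℂ) * (a (i+j) + r (i+j) t) * lam ^ j *
      fBell (i-1) (fun k => iteratedDeriv (k-1) z t)

def aT (n : ℕ) {m : ℕ} (γ : Fin m → ℂ) (j : Fin m) : ℝ :=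
  ∑ i ∈ Finset.range (n-1), ‖γ j‖ ^ i

def Lconst (n : ℕ) (γ : Fin (n-1) → ℂ) (r : ℕ → ℝ → ℂ) (lam : ℂ) (β : ℝ) : ℝ≥0∞ :=
  ∑ j, ∑ k ∈ Finset.Icc 1 (n-1),
    ENNReal.ofReal (aT n γ j / (‖Gam γ j‖ * (Nat.factorial k))) *
      ⨆ t : ℝ, Iop (((γ j).re - Real.sign (γ j).re * β : ℝ) : ℂ) (PrlD n k r lam) t

def Qconst (n : ℕ) (γ : Fin (n-1) → ℂ) (a : ℕ → ℂ) (r : ℕ → ℝ → ℂ) (lam : ℂ) (β : ℝ) : ℝ≥0∞ :=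
  ∑ j, ∑ i ∈ Finset.Icc 2 n, ∑ k ∈ Finset.range (i-1),
    ENNReal.ofReal (aT n γ j / ‖Gam γ j‖ * (Nat.choose i k) * ‖lam‖ ^ k) *
      (ENNReal.ofReal (‖a i‖ / |(γ j).re - Real.sign (γ j).re * β|) +
        ⨆ t : ℝ, Iop (((γ j).re - Real.sign (γ j).re * β : ℝ) : ℂ) (r i) t)

def mConst (n : ℕ) (δ : ℝ) : ℝ :=
  sSup { q : ℝ | ∃ i ∈ Finset.Icc 1 (n-1), ∃ X Y : ℕ → ℂ,
    (∑ k ∈ Finset.Icc 1 i, ‖X k‖) ≤ δ ∧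
    (∑ k ∈ Finset.Icc 1 i, ‖Y k‖) ≤ δ ∧
    (∑ k ∈ Finset.Icc 1 i, ‖X k - Y k‖) ≠ 0 ∧
    q = ‖fBell i X - fBell i Y‖ / ∑ k ∈ Finset.Icc 1 i, ‖X k - Y k‖ }

/-! Uniform convergence of a subsequence of the translates `f (· + φ m)` makes every difference
`φ m - φ N` with `N ≤ m` large an `ε`-almost period: `dist (f (s + τ)) (f s) < ε` for all `s`.
Such almost periods exist arbitrarily far to the right, so each value `f t` is approached by `f`
at `+∞`, which settles the case of a limit. If `f t ≠ 0`, then around every translate `t + τ` of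
`t` by an almost period, `‖f‖ ^ p` has integral bounded below on an interval of fixed length,
while the tails of a finite integral over `(0, ∞)` tend to zero. -/

theorem tendsto_setLIntegral_Ioi_atTop_zero {μ : Measure ℝ} {g : ℝ → ℝ≥0∞} {a : ℝ}
    (h : ∫⁻ t in Set.Ioi a, g t ∂μ ≠ ∞) :
    Tendsto (fun R => ∫⁻ t in Set.Ioi R, g t ∂μ) atTop (𝓝 0) := by
  have hempty : ⋂ R : ℝ, Set.Ioi R = ∅ :=
    Set.eq_empty_of_forall_notMem fun x hx => lt_irrefl x (Set.mem_iInter.mp hx x)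
  have hν := tendsto_measure_iInter_atTop (μ := μ.withDensity g)
    (fun R => measurableSet_Ioi.nullMeasurableSet) (fun _ _ hRS => Set.Ioi_subset_Ioi hRS)
    ⟨a, by rwa [withDensity_apply g measurableSet_Ioi]⟩
  rw [hempty, measure_empty] at hν
  exact hν.congr fun R => withDensity_apply g measurableSet_Ioi

theorem ofReal_rpow_mul_le_setLIntegral_ball {E : Type*} [NormedAddCommGroup E] {f : ℝ → E}
    {x r a p : ℝ} (hp : 0 ≤ p) (hf : ∀ s ∈ Metric.ball x r, a ≤ ‖f s‖) :
    ENNReal.ofReal a ^ p * ENNReal.ofReal (2 * r) ≤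
      ∫⁻ s in Metric.ball x r, (‖f s‖₊ : ℝ≥0∞) ^ p := by
  rw [← Real.volume_ball x r, ← setLIntegral_const]
  refine setLIntegral_mono' Metric.isOpen_ball.measurableSet fun s hs => ?_
  rw [← enorm_eq_nnnorm, ← ofReal_norm]
  exact ENNReal.rpow_le_rpow (ENNReal.ofReal_le_ofReal (hf s hs)) hp

namespace AP

variable {f : ℝ → ℂ}

theorem frequently_almostPeriod (hf : AP f) {ε : ℝ} (hε : 0 < ε) :
    ∃ᶠ τ in atTop, ∀ s, dist (f (s + τ)) (f s) < ε := by
  obtain ⟨φ, hφ, g, hg⟩ := hf.2 fun k => (k : ℝ)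
  obtain ⟨N, hN⟩ := eventually_atTop.mp (Metric.tendstoUniformly_iff.mp hg (ε / 2) (half_pos hε))
  have hτ : Tendsto (fun m => (φ m : ℝ) - φ N) atTop atTop :=
    tendsto_atTop_add_const_right _ _ (tendsto_natCast_atTop_atTop.comp hφ.tendsto_atTop)
  refine hτ.frequently (Eventually.frequently (eventually_atTop.mpr ⟨N, fun m hm s => ?_⟩))
  -- both `f (s + τ)` and `f s` are translates of `f` at `s - φ N` close to `g (s - φ N)`
  have h₁ := hN m hm (s - φ N)
  have h₂ := hN N le_rfl (s - φ N)
  rw [sub_add_cancel] at h₂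
  rw [show s - φ N + φ m = s + (φ m - φ N) by ring] at h₁
  calc dist (f (s + (φ m - φ N))) (f s)
      ≤ dist (g (s - φ N)) (f (s + (φ m - φ N))) + dist (g (s - φ N)) (f s) :=
        dist_triangle_left _ _ _
    _ < ε / 2 + ε / 2 := add_lt_add h₁ h₂
    _ = ε := add_halves ε

theorem eq_of_tendsto (hf : AP f) {c : ℂ} (hc : Tendsto f atTop (𝓝 c)) (t : ℝ) : f t = c := by
  refine eq_of_forall_dist_le fun ε hε => ?_
  have hlim : Tendsto (fun τ => dist (f (t + τ)) (f t)) atTop (𝓝 (dist c (f t))) :=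
    (hc.comp (tendsto_atTop_add_const_left _ t tendsto_id)).dist tendsto_const_nhds
  rw [dist_comm]
  exact le_of_tendsto_of_frequently hlim
    ((hf.frequently_almostPeriod hε).mono fun τ hτ => (hτ t).le)

theorem eq_zero_of_lintegral_Ioi_rpow_ne_top (hf : AP f) {p : ℝ} (hp : 0 ≤ p)
    (hint : ∫⁻ t in Set.Ioi 0, (‖f t‖₊ : ℝ≥0∞) ^ p ≠ ∞) (t : ℝ) : f t = 0 := by
  by_contra h0
  set δ := ‖f t‖
  have hδ : 0 < δ := norm_pos_iff.mpr h0
  obtain ⟨η, hη, hnear⟩ : ∃ η > 0, ∀ s, dist s t < η → δ / 2 < ‖f s‖ :=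
    Metric.eventually_nhds_iff.mp
      (hf.1.norm.continuousAt.eventually (lt_mem_nhds (half_lt_self hδ)))
  set c : ℝ≥0∞ := ENNReal.ofReal (δ / 4) ^ p * ENNReal.ofReal (2 * η)
  have hc : 0 < c := ENNReal.mul_pos
    (ENNReal.rpow_pos (ENNReal.ofReal_pos.mpr (by positivity)) ENNReal.ofReal_ne_top).ne'
    (ENNReal.ofReal_pos.mpr (by positivity)).ne'
  have hbump : ∀ τ, (∀ s, dist (f (s + τ)) (f s) < δ / 4) →
      c ≤ ∫⁻ s in Set.Ioi (t + τ - η), (‖f s‖₊ : ℝ≥0∞) ^ p := by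
    intro τ hτ
    have hlow : ∀ s ∈ Metric.ball (t + τ) η, δ / 4 ≤ ‖f s‖ := by
      intro s hs
      have h₁ : δ / 2 < ‖f (s - τ)‖ := hnear _ <| by
        rw [Metric.mem_ball, Real.dist_eq] at hs
        rw [Real.dist_eq, sub_right_comm, sub_sub]
        exact hs
      have h₂ := hτ (s - τ)
      rw [sub_add_cancel, dist_eq_norm] at h₂
      linarith [norm_sub_norm_le (f (s - τ)) (f s), norm_sub_rev (f s) (f (s - τ))]
    calc c ≤ ∫⁻ s in Metric.ball (t + τ) η, (‖f s‖₊ : ℝ≥0∞) ^ p :=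
          ofReal_rpow_mul_le_setLIntegral_ball hp hlow
      _ ≤ ∫⁻ s in Set.Ioi (t + τ - η), (‖f s‖₊ : ℝ≥0∞) ^ p := by
          refine lintegral_mono_set fun s hs => ?_
          rw [Real.ball_eq_Ioo] at hs
          exact hs.1
  have htail : Tendsto (fun τ => ∫⁻ s in Set.Ioi (t + τ - η), (‖f s‖₊ : ℝ≥0∞) ^ p) atTop (𝓝 0) :=
    (tendsto_setLIntegral_Ioi_atTop_zero hint).comp
      (tendsto_atTop_atTop.mpr fun b => ⟨b - t + η, fun τ hτ => by linarith⟩)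
  obtain ⟨τ, hτ, hsmall⟩ := ((hf.frequently_almostPeriod (by positivity : 0 < δ / 4)).and_eventually
      (htail.eventually (gt_mem_nhds hc))).exists
  exact (hbump τ hτ).not_gt hsmall

end AP

/-- If `f` is almost periodic and converges at `+∞`, it is constant;
if `|f|^p` is integrable on `[0,∞)` for some `p ≥ 1`, then `f ≡ 0`. -/
theorem stmt0 (p : ℝ) (hp : 1 ≤ p) (f : ℝ → ℂ) (hf : AP f) :
    (∀ c : ℂ, Tendsto f atTop (nhds c) → ∀ t, f t = c) ∧
    ((∫⁻ t in Set.Ioi (0:ℝ), (‖f t‖₊ : ℝ≥0∞) ^ p) < ⊤ → ∀ t, f t = 0) :=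
  ⟨fun _ hc => hf.eq_of_tendsto hc,
    fun hint => hf.eq_zero_of_lintegral_Ioi_rpow_ne_top (zero_le_one.trans hp) hint.ne⟩

end
end

section
/- Let α be a nonzero real number, let 0 < β < |α|, and let a, b : ℝ → ℂ be locally integrable. Then for every t ∈ ℝ: (i) I_α[a · I_{sgn(α)β}[b]](t) ≤ I_{sgn(α)β}[b](t) · I_{α − sgn(α)β}[a](t); (ii) I_α[a](t) ≤ I_{sgn(α)β}[a](t); (iii) I_α[a · (I_β + I_{−β})[b]](t) ≤ 2 (I_β + I_{−β})[b](t) · I_{α − sgn(α)β}[a](t). -/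
open MeasureTheory Filter Topology
open scoped ENNReal NNReal

noncomputable section

/-- `I_ω` applied to a nonnegative (extended-real-valued) weight times `|a|`. -/
def IopE (ω : ℂ) (f : ℝ → ℝ≥0∞) (t : ℝ) : ℝ≥0∞ := ∫⁻ s : ℝ, (‖gker ω t s‖₊ : ℝ≥0∞) * f s

/-!
For real `ω`, `|g_ω(t,u)| = exp (-|ω| |t - u|)` on the half-line `sgn ω · (t - u) < 0` and `0`
off it. By the triangle inequality `|t - u| ≤ |t - s| + |s - u|`, moving the base point from `t`
to `s` costs at most a factor `exp (β |t - s|)`: for `I_ν` with `|ν| = β` when `s` lies in the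
half-line of `t` (which then contains that of `s`), and for every `s` for `I_β + I_{-β}`, whose
kernel is the two-sided `exp (-β |t - u|)`. Multiplying `|g_α(t,s)|` by `exp (β |t - s|)` gives
exactly `|g_{α - sgn(α) β}(t,s)|`, which proves (i) and (iii); (ii) is the monotonicity of the
kernel in `|ω|`.
-/

lemma nnnorm_gker_ofReal (ω t s : ℝ) :
    (‖gker ω t s‖₊ : ℝ≥0∞) =
      if Real.sign ω * (t - s) < 0 then ENNReal.ofReal (Real.exp (-|ω| * |t - s|)) else 0 := by
  simp only [gker, Complex.ofReal_re]
  split_ifs with h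
  · have hexp : ω * (t - s) = -|ω| * |t - s| := by
      rcases lt_trichotomy ω 0 with hω | rfl | hω
      · rw [Real.sign_of_neg hω] at h
        rw [abs_of_neg hω, abs_of_pos (by linarith)]; ring
      · simp at h
      · rw [Real.sign_of_pos hω] at h
        rw [abs_of_pos hω, abs_of_neg (by linarith)]; ring
    have hsign : |Real.sign ω| = 1 := by
      rcases Real.sign_apply_eq ω with h' | h' | h' <;> simp_all
    rw [← enorm_eq_nnnorm, ← ofReal_norm, norm_mul, Complex.norm_real, Real.norm_eq_abs, abs_neg,
      hsign, one_mul, Complex.norm_exp, ← Complex.ofReal_mul, Complex.ofReal_re, hexp]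
  · simp

lemma aemeasurable_nnnorm_gker_mul (ω : ℂ) {f : ℝ → ℂ} (hf : AEMeasurable f) (t : ℝ) :
    AEMeasurable fun s => (‖gker ω t s‖₊ : ℝ≥0∞) * ‖f s‖₊ := by
  have hset : MeasurableSet {s : ℝ | Real.sign ω.re * (t - s) < 0} :=
    measurableSet_lt (by fun_prop) measurable_const
  have hker : Measurable (gker ω t) := Measurable.ite hset (by fun_prop) measurable_const
  exact hker.nnnorm.coe_nnreal_ennreal.aemeasurable.mul hf.nnnorm.coe_nnreal_ennreal

lemma Iop_eq_lintegral (ω : ℂ) (f : ℝ → ℂ) (t : ℝ) :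
    Iop ω f t = ∫⁻ s, (‖gker ω t s‖₊ : ℝ≥0∞) * ‖f s‖₊ := by
  simp only [Iop, nnnorm_mul, ENNReal.coe_mul]

lemma nnnorm_gker_le_of_sign_eq {ω ν : ℝ} (hs : Real.sign ω = Real.sign ν) (h : |ν| ≤ |ω|)
    (t s : ℝ) : (‖gker ω t s‖₊ : ℝ≥0∞) ≤ ‖gker ν t s‖₊ := by
  rw [nnnorm_gker_ofReal, nnnorm_gker_ofReal, hs]
  split_ifs
  · gcongr
  · rfl

lemma Iop_le_Iop_of_sign_eq {ω ν : ℝ} (hs : Real.sign ω = Real.sign ν) (h : |ν| ≤ |ω|)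
    (f : ℝ → ℂ) (t : ℝ) : Iop ω f t ≤ Iop ν f t := by
  simp only [Iop_eq_lintegral]
  exact lintegral_mono fun s => mul_le_mul_left (nnnorm_gker_le_of_sign_eq hs h t s) _

lemma nnnorm_gker_sub_sign_mul {α β : ℝ} (hβ : β < |α|) (t s : ℝ) :
    (‖gker ((α - Real.sign α * β : ℝ) : ℂ) t s‖₊ : ℝ≥0∞) =
      ‖gker (α : ℂ) t s‖₊ * ENNReal.ofReal (Real.exp (β * |t - s|)) := by
  obtain rfl | hα := eq_or_ne α 0
  · simp [gker]
  have hsub : Real.sign (α - Real.sign α * β) = Real.sign α ∧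
      |α - Real.sign α * β| = |α| - β := by
    rcases hα.lt_or_gt with hα | hα
    · rw [abs_of_neg hα] at hβ ⊢
      rw [Real.sign_of_neg hα, Real.sign_of_neg (by linarith), abs_of_neg (by linarith)]
      constructor <;> ring
    · rw [abs_of_pos hα] at hβ ⊢
      rw [Real.sign_of_pos hα, Real.sign_of_pos (by linarith), abs_of_pos (by linarith)]
      constructor <;> ring
  rw [nnnorm_gker_ofReal, nnnorm_gker_ofReal, hsub.1, hsub.2]
  split_ifs
  · rw [← ENNReal.ofReal_mul (Real.exp_nonneg _), ← Real.exp_add]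
    ring_nf
  · simp

lemma nnnorm_gker_le_exp_mul {ν t s : ℝ} (h : Real.sign ν * (t - s) < 0) (u : ℝ) :
    (‖gker ν s u‖₊ : ℝ≥0∞) ≤ ENNReal.ofReal (Real.exp (|ν| * |t - s|)) * ‖gker ν t u‖₊ := by
  rw [nnnorm_gker_ofReal, nnnorm_gker_ofReal]
  split_ifs with hsu htu
  · rw [← ENNReal.ofReal_mul (Real.exp_nonneg _), ← Real.exp_add]
    gcongr
    nlinarith [abs_sub_le t s u, abs_nonneg ν]
  · exact absurd (by linarith : Real.sign ν * (t - u) < 0) htu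
  all_goals exact zero_le

lemma Iop_le_exp_mul_Iop {ν t s : ℝ} (h : Real.sign ν * (t - s) < 0) (f : ℝ → ℂ) :
    Iop ν f s ≤ ENNReal.ofReal (Real.exp (|ν| * |t - s|)) * Iop ν f t := by
  simp only [Iop_eq_lintegral]
  rw [← lintegral_const_mul' _ _ ENNReal.ofReal_ne_top]
  refine lintegral_mono fun u => ?_
  rw [← mul_assoc]
  exact mul_le_mul_left (nnnorm_gker_le_exp_mul h u) _

lemma nnnorm_gker_add_nnnorm_gker_neg {β : ℝ} (hβ : 0 < β) {t u : ℝ} (hu : u ≠ t) :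
    (‖gker β t u‖₊ : ℝ≥0∞) + ‖gker ((-β : ℝ) : ℂ) t u‖₊ =
      ENNReal.ofReal (Real.exp (-β * |t - u|)) := by
  rw [nnnorm_gker_ofReal, nnnorm_gker_ofReal, Real.sign_neg, Real.sign_of_pos hβ, abs_neg,
    abs_of_pos hβ]
  rcases hu.lt_or_gt with h | h
  · rw [if_neg (by linarith), if_pos (by linarith), zero_add]
  · rw [if_pos (by linarith), if_neg (by linarith), add_zero]

lemma Iop_add_Iop_neg {β : ℝ} (hβ : 0 < β) {f : ℝ → ℂ} (hf : AEMeasurable f) (t : ℝ) :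
    Iop β f t + Iop ((-β : ℝ) : ℂ) f t =
      ∫⁻ u, ENNReal.ofReal (Real.exp (-β * |t - u|)) * ‖f u‖₊ := by
  simp only [Iop_eq_lintegral]
  rw [← lintegral_add_left' (aemeasurable_nnnorm_gker_mul _ hf t)]
  refine lintegral_congr_ae ?_
  filter_upwards [volume.ae_ne t] with u hu
  rw [← add_mul, nnnorm_gker_add_nnnorm_gker_neg hβ hu]

lemma Iop_add_Iop_neg_le {β : ℝ} (hβ : 0 < β) {f : ℝ → ℂ} (hf : AEMeasurable f) (t s : ℝ) :
    Iop β f s + Iop ((-β : ℝ) : ℂ) f s ≤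
      ENNReal.ofReal (Real.exp (β * |t - s|)) * (Iop β f t + Iop ((-β : ℝ) : ℂ) f t) := by
  rw [Iop_add_Iop_neg hβ hf, Iop_add_Iop_neg hβ hf, ← lintegral_const_mul' _ _ ENNReal.ofReal_ne_top]
  refine lintegral_mono fun u => ?_
  rw [← mul_assoc, ← ENNReal.ofReal_mul (Real.exp_nonneg _), ← Real.exp_add]
  gcongr ENNReal.ofReal (Real.exp ?_) * _
  nlinarith [abs_sub_le t s u]

lemma IopE_le_mul_Iop_sub {α β : ℝ} (hβ : β < |α|) {a : ℝ → ℂ} (ha : AEMeasurable a) {t : ℝ}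
    {w : ℝ → ℝ≥0∞} {W : ℝ≥0∞}
    (hw : ∀ s, Real.sign α * (t - s) < 0 → w s ≤ ENNReal.ofReal (Real.exp (β * |t - s|)) * W) :
    IopE α (fun s => ‖a s‖₊ * w s) t ≤ W * Iop ((α - Real.sign α * β : ℝ) : ℂ) a t := by
  rw [Iop_eq_lintegral, mul_comm W, ← lintegral_mul_const'' W (aemeasurable_nnnorm_gker_mul _ ha t)]
  refine lintegral_mono fun s => ?_
  by_cases hs : Real.sign α * (t - s) < 0
  · calc (‖gker α t s‖₊ : ℝ≥0∞) * (‖a s‖₊ * w s)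
        ≤ ‖gker α t s‖₊ * (‖a s‖₊ * (ENNReal.ofReal (Real.exp (β * |t - s|)) * W)) := by
          gcongr; exact hw s hs
      _ = ‖gker ((α - Real.sign α * β : ℝ) : ℂ) t s‖₊ * ‖a s‖₊ * W := by
          rw [nnnorm_gker_sub_sign_mul hβ]; ring
  · rw [nnnorm_gker_ofReal, if_neg hs, zero_mul]
    exact zero_le

theorem stmt1_general (α β : ℝ) (hβ0 : 0 < β) (hβ : β < |α|)
    (a b : ℝ → ℂ) (ha : LocallyIntegrable a volume) (hb : LocallyIntegrable b volume)
    (t : ℝ) :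
    IopE ((α : ℝ) : ℂ) (fun s => (‖a s‖₊ : ℝ≥0∞) * Iop ((Real.sign α * β : ℝ) : ℂ) b s) t ≤
      Iop ((Real.sign α * β : ℝ) : ℂ) b t * Iop ((α - Real.sign α * β : ℝ) : ℂ) a t ∧
    Iop ((α : ℝ) : ℂ) a t ≤ Iop ((Real.sign α * β : ℝ) : ℂ) a t ∧
    IopE ((α : ℝ) : ℂ)
        (fun s => (‖a s‖₊ : ℝ≥0∞) * (Iop ((β : ℝ) : ℂ) b s + Iop ((-β : ℝ) : ℂ) b s)) t ≤
      2 * (Iop ((β : ℝ) : ℂ) b t + Iop ((-β : ℝ) : ℂ) b t) *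
        Iop ((α - Real.sign α * β : ℝ) : ℂ) a t := by
  have ha' : AEMeasurable a := ha.aestronglyMeasurable.aemeasurable
  have hb' : AEMeasurable b := hb.aestronglyMeasurable.aemeasurable
  obtain ⟨hsign, habs⟩ : Real.sign (Real.sign α * β) = Real.sign α ∧ |Real.sign α * β| = β := by
    rcases (abs_pos.mp (hβ0.trans hβ)).lt_or_gt with hα | hα
    · simp [Real.sign_of_neg hα, Real.sign_neg, Real.sign_of_pos hβ0, abs_of_pos hβ0]
    · simp [Real.sign_of_pos hα, Real.sign_of_pos hβ0, abs_of_pos hβ0]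
  refine ⟨?_, ?_, ?_⟩
  · refine IopE_le_mul_Iop_sub hβ ha' fun s hs => ?_
    have hshift := Iop_le_exp_mul_Iop (hsign ▸ hs) b
    rwa [habs] at hshift
  · exact Iop_le_Iop_of_sign_eq hsign.symm (habs.trans_le hβ.le) a t
  · refine IopE_le_mul_Iop_sub hβ ha' fun s _ => ?_
    calc Iop β b s + Iop ((-β : ℝ) : ℂ) b s
        ≤ ENNReal.ofReal (Real.exp (β * |t - s|)) * (Iop β b t + Iop ((-β : ℝ) : ℂ) b t) :=
          Iop_add_Iop_neg_le hβ0 hb' t s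
      _ ≤ _ := by gcongr; exact le_mul_of_one_le_left' one_le_two

/-- The three basic inequalities for the operators `I_ω`. -/
theorem stmt1 (α β : ℝ) (hα : α ≠ 0) (hβ0 : 0 < β) (hβ : β < |α|)
    (a b : ℝ → ℂ) (ha : LocallyIntegrable a volume) (hb : LocallyIntegrable b volume)
    (t : ℝ) :
    IopE ((α : ℝ) : ℂ) (fun s => (‖a s‖₊ : ℝ≥0∞) * Iop ((Real.sign α * β : ℝ) : ℂ) b s) t ≤
      Iop ((Real.sign α * β : ℝ) : ℂ) b t * Iop ((α - Real.sign α * β : ℝ) : ℂ) a t ∧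
    Iop ((α : ℝ) : ℂ) a t ≤ Iop ((Real.sign α * β : ℝ) : ℂ) a t ∧
    IopE ((α : ℝ) : ℂ)
        (fun s => (‖a s‖₊ : ℝ≥0∞) * (Iop ((β : ℝ) : ℂ) b s + Iop ((-β : ℝ) : ℂ) b s)) t ≤
      2 * (Iop ((β : ℝ) : ℂ) b t + Iop ((-β : ℝ) : ℂ) b t) *
        Iop ((α - Real.sign α * β : ℝ) : ℂ) a t :=
  stmt1_general α β hβ0 hβ a b ha hb t

end
end

section
/- Let γ ∈ ℂ with α := Re γ ≠ 0, let p ≥ 1, and let r : ℝ → ℂ be bounded and continuous. Then: (i) if r ∈ BC_0 then I_α[r] ∈ BC_0; (ii) if r ∈ C_00 then I_α[r] ∈ C_00; (iii) if r ∈ L^p_0 then I_α[r] ∈ BC_0 ∩ L^p_0; (iv) if r ∈ L^p(ℝ) then I_α[r] ∈ C_00 ∩ L^p(ℝ); (v) if r ∈ L^p(−∞,0] then I_α[r](t) → 0 as t → −∞ and I_α[r] ∈ L^p(−∞,0]. -/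
open MeasureTheory Filter Topology
open scoped ENNReal NNReal

noncomputable section

/-!
Since `‖g_γ(t, s)‖ ≤ e^{-β|t - s|}` with `β = |Re γ|`, the operator `I_γ[r]` is dominated
pointwise by the convolution `expConv β |r|` of `|r|` with the integrable kernel `e^{-β|u|}`.
Continuity holds because `I_γ[r]` is itself the convolution of the integrable kernel
`‖g_γ(·, 0)‖` with the bounded continuous function `|r|`.
Decay at `+∞` follows from dominated convergence. For the `L^p` statements, Hölder's inequality
for the finite measure `e^{-β|t - s|} ds` gives `(K * f)^p ≤ ‖K‖₁^{p-1} (K * f^p)`, which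
reduces them to `L¹` facts: Fubini on the whole line, and on `(0, ∞)` the estimate
`K * 1_{(-∞,0]} ≲ e^{-βt/2}`.
The reflection `t ↦ -t`, which turns `γ` into `-γ`, moves every statement from `+∞` to `-∞`.
-/

open Set

def expKernel (β u : ℝ) : ℝ≥0∞ := ENNReal.ofReal (Real.exp (-β * |u|))

def expConv (β : ℝ) (f : ℝ → ℝ≥0∞) (t : ℝ) : ℝ≥0∞ :=
  ∫⁻ s, expKernel β (t - s) * f s

section expKernel

variable {β : ℝ}

@[fun_prop]
lemma measurable_expKernel (β : ℝ) : Measurable (expKernel β) := by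
  unfold expKernel; fun_prop

lemma expKernel_le_one (hβ : 0 ≤ β) (u : ℝ) : expKernel β u ≤ 1 := by
  rw [expKernel, ENNReal.ofReal_le_one, Real.exp_le_one_iff]
  nlinarith [abs_nonneg u]

lemma expKernel_ne_zero (u : ℝ) : expKernel β u ≠ 0 :=
  (ENNReal.ofReal_pos.2 (Real.exp_pos _)).ne'

lemma integrable_exp_neg_mul_abs (hβ : 0 < β) :
    Integrable fun u : ℝ => Real.exp (-β * |u|) := by
  rw [← integrableOn_univ, ← Iic_union_Ioi (a := (0 : ℝ)), integrableOn_union]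
  constructor
  · refine (integrableOn_exp_mul_Iic hβ 0).congr_fun (fun u hu => ?_) measurableSet_Iic
    rw [abs_of_nonpos hu]; ring_nf
  · refine (exp_neg_integrableOn_Ioi 0 hβ).congr_fun (fun u hu => ?_) measurableSet_Ioi
    rw [abs_of_pos hu]

lemma lintegral_expKernel_lt_top (hβ : 0 < β) : ∫⁻ u, expKernel β u < ⊤ := by
  have h := (integrable_exp_neg_mul_abs hβ).hasFiniteIntegral
  rw [HasFiniteIntegral] at h
  simpa only [expKernel, Real.enorm_eq_ofReal (Real.exp_pos _).le] using h

lemma lintegral_expKernel_sub_left (β t : ℝ) :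
    ∫⁻ s, expKernel β (t - s) = ∫⁻ u, expKernel β u :=
  lintegral_sub_left_eq_self (expKernel β) t

lemma lintegral_expKernel_sub_right (β s : ℝ) :
    ∫⁻ t, expKernel β (t - s) = ∫⁻ u, expKernel β u :=
  lintegral_sub_right_eq_self (expKernel β) s

lemma tendsto_expKernel_sub_atTop (hβ : 0 < β) (s : ℝ) :
    Tendsto (fun t => expKernel β (t - s)) atTop (𝓝 0) := by
  have h : Tendsto (fun t : ℝ => -β * |t - s|) atTop atBot :=
    (tendsto_abs_atTop_atTop.comp (tendsto_atTop_add_const_right _ (-s) tendsto_id))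
      |>.const_mul_atTop_of_neg (neg_lt_zero.2 hβ)
  simpa [expKernel] using ENNReal.tendsto_ofReal (Real.tendsto_exp_atBot.comp h)

end expKernel

section expConv

variable {β p : ℝ} {f g : ℝ → ℝ≥0∞} {C : ℝ≥0∞}

@[fun_prop]
lemma measurable_expConv (hf : Measurable f) : Measurable (expConv β f) :=
  Measurable.lintegral_prod_right (f := fun t s => expKernel β (t - s) * f s) (by fun_prop)

lemma expConv_eq_lintegral_shift (t : ℝ) :
    expConv β f t = ∫⁻ u, expKernel β u * f (t - u) := by
  rw [expConv, ← lintegral_sub_left_eq_self _ t]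
  simp only [sub_sub_cancel]

lemma expConv_add (hf : Measurable f) (t : ℝ) :
    expConv β (f + g) t = expConv β f t + expConv β g t := by
  simp only [expConv, Pi.add_apply, mul_add]
  exact lintegral_add_left (by fun_prop) _

lemma expConv_le_mul (hfC : ∀ s, f s ≤ C) (t : ℝ) :
    expConv β f t ≤ C * ∫⁻ u, expKernel β u := by
  calc expConv β f t ≤ ∫⁻ s, expKernel β (t - s) * C :=
        lintegral_mono fun s => by gcongr; exact hfC s
    _ = C * ∫⁻ u, expKernel β u := by
      rw [lintegral_mul_const _ (by fun_prop), lintegral_expKernel_sub_left, mul_comm]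

lemma lintegral_expConv (hf : Measurable f) :
    ∫⁻ t, expConv β f t = (∫⁻ u, expKernel β u) * ∫⁻ s, f s := by
  simp only [expConv]
  rw [lintegral_lintegral_swap (by fun_prop), ← lintegral_const_mul _ hf]
  refine lintegral_congr fun s => ?_
  rw [lintegral_mul_const _ (by fun_prop), lintegral_expKernel_sub_right]

lemma expConv_rpow_le (hp : 1 ≤ p) (hf : Measurable f) (t : ℝ) :
    expConv β f t ^ p
      ≤ (∫⁻ u, expKernel β u) ^ (p - 1) * expConv β (fun s => f s ^ p) t := by
  have hp0 : 0 < p := by linarith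
  have hp' : 0 ≤ 1 - 1 / p := by rw [sub_nonneg, div_le_one hp0]; exact hp
  have holder := ENNReal.lintegral_mul_norm_pow_le (μ := volume) (p := 1 / p) (q := 1 - 1 / p)
    (f := fun s => expKernel β (t - s) * f s ^ p) (g := fun s => expKernel β (t - s))
    (by fun_prop) (by fun_prop) (by positivity) hp' (by ring)
  have hK : ∀ s, (expKernel β (t - s) * f s ^ p) ^ (1 / p) * expKernel β (t - s) ^ (1 - 1 / p)
      = expKernel β (t - s) * f s := fun s => by
    rw [ENNReal.mul_rpow_of_nonneg _ _ (by positivity), ← ENNReal.rpow_mul,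
      mul_one_div_cancel hp0.ne', ENNReal.rpow_one, mul_right_comm,
      ← ENNReal.rpow_add _ _ (expKernel_ne_zero _) ENNReal.ofReal_ne_top, add_sub_cancel,
      ENNReal.rpow_one]
  simp only [hK, lintegral_expKernel_sub_left] at holder
  calc expConv β f t ^ p
      ≤ (expConv β (fun s => f s ^ p) t ^ (1 / p)
          * (∫⁻ u, expKernel β u) ^ (1 - 1 / p)) ^ p :=
        ENNReal.rpow_le_rpow holder hp0.le
    _ = (∫⁻ u, expKernel β u) ^ (p - 1) * expConv β (fun s => f s ^ p) t := by
      rw [ENNReal.mul_rpow_of_nonneg _ _ hp0.le, ← ENNReal.rpow_mul, ← ENNReal.rpow_mul,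
        one_div_mul_cancel hp0.ne', ENNReal.rpow_one, sub_mul, one_div_mul_cancel hp0.ne',
        one_mul, mul_comm]

lemma lintegral_expConv_rpow_le (hp : 1 ≤ p) (hf : Measurable f) :
    ∫⁻ t, expConv β f t ^ p
      ≤ (∫⁻ u, expKernel β u) ^ (p - 1)
          * ((∫⁻ u, expKernel β u) * ∫⁻ s, f s ^ p) := by
  calc ∫⁻ t, expConv β f t ^ p
      ≤ ∫⁻ t, (∫⁻ u, expKernel β u) ^ (p - 1) * expConv β (fun s => f s ^ p) t :=
        lintegral_mono fun t => expConv_rpow_le hp hf t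
    _ = _ := by
      rw [lintegral_const_mul _ (measurable_expConv (by fun_prop)),
        lintegral_expConv (by fun_prop)]

lemma tendsto_expConv_of_tendsto (hβ : 0 < β) (hf : Measurable f) (hC : C ≠ ⊤)
    (hfC : ∀ s, f s ≤ C) (hlim : Tendsto f atTop (𝓝 0)) :
    Tendsto (expConv β f) atTop (𝓝 0) := by
  simp_rw [funext fun t => expConv_eq_lintegral_shift (β := β) (f := f) t]
  have h := tendsto_lintegral_filter_of_dominated_convergence (μ := volume)
    (F := fun t u => expKernel β u * f (t - u)) (f := fun _ => 0) (fun u => expKernel β u * C)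
    (Eventually.of_forall fun t => by fun_prop)
    (Eventually.of_forall fun t => ae_of_all _ fun u => by gcongr; exact hfC _)
    (by rw [lintegral_mul_const _ (by fun_prop)]
        exact ENNReal.mul_ne_top (lintegral_expKernel_lt_top hβ).ne hC)
    (ae_of_all _ fun u => by
      have h := ENNReal.Tendsto.const_mul (a := expKernel β u)
        (hlim.comp (tendsto_atTop_add_const_right _ (-u) tendsto_id)) (Or.inr ENNReal.ofReal_ne_top)
      simpa only [mul_zero, ← sub_eq_add_neg, Function.comp_def, id] using h)
  simpa using h

lemma tendsto_expConv_of_lintegral_ne_top (hβ : 0 < β) (hg : Measurable g)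
    (hint : ∫⁻ s, g s ≠ ⊤) : Tendsto (expConv β g) atTop (𝓝 0) := by
  unfold expConv
  have h := tendsto_lintegral_filter_of_dominated_convergence (μ := volume)
    (F := fun t s => expKernel β (t - s) * g s) (f := fun _ => 0) g
    (Eventually.of_forall fun t => by fun_prop)
    (Eventually.of_forall fun t => ae_of_all _ fun s =>
      mul_le_of_le_one_left' (expKernel_le_one hβ.le _))
    hint
    (by filter_upwards [ae_lt_top hg hint] with s hs
        simpa using ENNReal.Tendsto.mul_const (tendsto_expKernel_sub_atTop hβ s) (Or.inr hs.ne))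
  simpa using h

end expConv

section expConvHalfLine

variable {β p : ℝ} {f : ℝ → ℝ≥0∞} {C : ℝ≥0∞}

lemma expKernel_le_mul (hβ : 0 ≤ β) {u v : ℝ} (h : |v| ≤ |u|) :
    expKernel β u ≤ expKernel (β / 2) u * expKernel (β / 2) v := by
  rw [expKernel, expKernel, expKernel, ← ENNReal.ofReal_mul (Real.exp_pos _).le, ← Real.exp_add]
  gcongr
  nlinarith

lemma expConv_eq_add_indicator (hf : Measurable f) (t : ℝ) :
    expConv β f t = expConv β ((Iic 0).indicator f) t + expConv β ((Ioi 0).indicator f) t := by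
  rw [← expConv_add (hf.indicator measurableSet_Iic), ← compl_Iic, indicator_self_add_compl]

lemma expConv_indicator_Iic_le (hβ : 0 < β) (hfC : ∀ s, f s ≤ C) {t : ℝ} (ht : 0 ≤ t) :
    expConv β ((Iic 0).indicator f) t
      ≤ C * (∫⁻ u, expKernel (β / 2) u) * expKernel (β / 2) t := by
  calc expConv β ((Iic 0).indicator f) t
      ≤ ∫⁻ s, expKernel (β / 2) (t - s) * (C * expKernel (β / 2) t) := by
        refine lintegral_mono fun s => ?_
        by_cases hs : s ≤ 0
        · have hts : |t| ≤ |t - s| := by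
            rw [abs_of_nonneg ht, abs_of_nonneg (by linarith)]; linarith
          rw [indicator_of_mem (show s ∈ Iic 0 from hs)]
          calc expKernel β (t - s) * f s
              ≤ expKernel (β / 2) (t - s) * expKernel (β / 2) t * C :=
                mul_le_mul' (expKernel_le_mul hβ.le hts) (hfC s)
            _ = expKernel (β / 2) (t - s) * (C * expKernel (β / 2) t) := by ring
        · rw [indicator_of_notMem (show s ∉ Iic 0 from hs), mul_zero]
          exact zero_le
    _ = C * (∫⁻ u, expKernel (β / 2) u) * expKernel (β / 2) t := by
      rw [lintegral_mul_const _ (by fun_prop), lintegral_expKernel_sub_left]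
      ring

lemma lintegral_Ioi_expConv_indicator_Iic_lt_top (hβ : 0 < β) (hC : C ≠ ⊤)
    (hfC : ∀ s, f s ≤ C) : ∫⁻ t in Ioi 0, expConv β ((Iic 0).indicator f) t < ⊤ := by
  have hβ2 : 0 < β / 2 := by positivity
  calc ∫⁻ t in Ioi 0, expConv β ((Iic 0).indicator f) t
      ≤ ∫⁻ t in Ioi 0, C * (∫⁻ u, expKernel (β / 2) u) * expKernel (β / 2) t :=
        setLIntegral_mono (by fun_prop) fun t ht => expConv_indicator_Iic_le hβ hfC (le_of_lt ht)
    _ ≤ C * (∫⁻ u, expKernel (β / 2) u) * ∫⁻ t, expKernel (β / 2) t := by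
        rw [lintegral_const_mul _ (by fun_prop)]
        exact mul_le_mul_right (setLIntegral_le_lintegral _ _) _
    _ < ⊤ := ENNReal.mul_lt_top (ENNReal.mul_lt_top hC.lt_top (lintegral_expKernel_lt_top hβ2))
        (lintegral_expKernel_lt_top hβ2)

lemma tendsto_expConv_of_lintegral_Ioi_rpow_ne_top (hβ : 0 < β) (hp : 1 ≤ p) (hf : Measurable f)
    (hC : C ≠ ⊤) (hfC : ∀ s, f s ≤ C) (hint : ∫⁻ s in Ioi 0, f s ^ p ≠ ⊤) :
    Tendsto (expConv β f) atTop (𝓝 0) := by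
  have hp0 : 0 < p := by linarith
  have hfp : Measurable fun s => f s ^ p := hf.pow_const p
  have hM : (∫⁻ u, expKernel β u) ^ (p - 1) ≠ ⊤ :=
    ENNReal.rpow_ne_top_of_nonneg (by linarith) (lintegral_expKernel_lt_top hβ).ne
  have hleft : Tendsto (expConv β ((Iic 0).indicator fun s => f s ^ p)) atTop (𝓝 0) := by
    refine tendsto_expConv_of_tendsto hβ (hfp.indicator measurableSet_Iic)
      (ENNReal.rpow_ne_top_of_nonneg hp0.le hC)
      (fun s => ?_) (tendsto_const_nhds.congr' ?_)
    · by_cases hs : s ∈ Iic 0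
      · rw [indicator_of_mem hs]; gcongr; exact hfC s
      · rw [indicator_of_notMem hs]; exact zero_le
    · filter_upwards [eventually_gt_atTop 0] with s hs
      exact (indicator_of_notMem (show s ∉ Iic 0 from not_le.2 hs) _).symm
  have hright : Tendsto (expConv β ((Ioi 0).indicator fun s => f s ^ p)) atTop (𝓝 0) :=
    tendsto_expConv_of_lintegral_ne_top hβ (hfp.indicator measurableSet_Ioi)
      (by rwa [lintegral_indicator measurableSet_Ioi])
  have hpow : Tendsto (fun t => expConv β f t ^ p) atTop (𝓝 0) := by
    refine tendsto_of_tendsto_of_tendsto_of_le_of_le tendsto_const_nhds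
      (by simpa using ENNReal.Tendsto.const_mul (hleft.add hright) (Or.inr hM))
      (fun _ => zero_le) (fun t => ?_)
    rw [← expConv_eq_add_indicator hfp]
    exact expConv_rpow_le hp hf t
  have h := (ENNReal.continuous_rpow_const (y := 1 / p)).tendsto 0 |>.comp hpow
  simpa [Function.comp_def, ← ENNReal.rpow_mul, mul_inv_cancel₀ hp0.ne', hp0] using h

lemma lintegral_Ioi_expConv_rpow_lt_top (hβ : 0 < β) (hp : 1 ≤ p) (hf : Measurable f)
    (hC : C ≠ ⊤) (hfC : ∀ s, f s ≤ C) (hint : ∫⁻ s in Ioi 0, f s ^ p ≠ ⊤) :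
    ∫⁻ t in Ioi 0, expConv β f t ^ p < ⊤ := by
  have hp0 : 0 < p := by linarith
  have hfp : Measurable fun s => f s ^ p := hf.pow_const p
  have hM := lintegral_expKernel_lt_top hβ
  have hleft := lintegral_Ioi_expConv_indicator_Iic_lt_top hβ
    (ENNReal.rpow_ne_top_of_nonneg hp0.le hC) (f := fun s => f s ^ p)
    (fun s => by gcongr; exact hfC s)
  have hright : ∫⁻ t in Ioi 0, expConv β ((Ioi 0).indicator fun s => f s ^ p) t < ⊤ := by
    refine (setLIntegral_le_lintegral _ _).trans_lt ?_
    rw [lintegral_expConv (hfp.indicator measurableSet_Ioi), lintegral_indicator measurableSet_Ioi]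
    exact ENNReal.mul_lt_top hM hint.lt_top
  calc ∫⁻ t in Ioi 0, expConv β f t ^ p
      ≤ ∫⁻ t in Ioi 0, (∫⁻ u, expKernel β u) ^ (p - 1) *
          (expConv β ((Iic 0).indicator fun s => f s ^ p) t
            + expConv β ((Ioi 0).indicator fun s => f s ^ p) t) :=
        setLIntegral_mono (by fun_prop (disch := measurability)) fun t _ => by
          rw [← expConv_eq_add_indicator hfp]
          exact expConv_rpow_le hp hf t
    _ < ⊤ := by
      rw [lintegral_const_mul _ (by fun_prop (disch := measurability)),
        lintegral_add_left (measurable_expConv (hfp.indicator measurableSet_Iic))]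
      exact ENNReal.mul_lt_top (ENNReal.rpow_lt_top_of_nonneg (by linarith) hM.ne)
        (ENNReal.add_lt_top.2 ⟨hleft, hright⟩)

end expConvHalfLine

section Green

variable {ω : ℂ} {r : ℝ → ℂ}

lemma gker_eq_sub (ω : ℂ) (t s : ℝ) : gker ω t s = gker ω (t - s) 0 := by
  simp [gker]

lemma gker_neg_neg (ω : ℂ) (t s : ℝ) : gker ω (-t) (-s) = -gker (-ω) t s := by
  have h : Real.sign ω.re * (-t - -s) = -Real.sign ω.re * (t - s) := by ring
  simp only [gker, Complex.neg_re, Real.sign_neg, h]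
  split_ifs <;> push_cast <;> ring_nf

lemma norm_gker_le (ω : ℂ) (t s : ℝ) :
    ‖gker ω t s‖ ≤ Real.exp (-|ω.re| * |t - s|) := by
  unfold gker
  split_ifs with h
  · rw [norm_mul, Complex.norm_exp, Complex.norm_real, Real.norm_eq_abs]
    simp only [Complex.mul_re, Complex.ofReal_re, Complex.ofReal_im, mul_zero, sub_zero]
    rcases lt_trichotomy ω.re 0 with hα | hα | hα
    · rw [Real.sign_of_neg hα] at h ⊢
      rw [abs_of_pos (show 0 < t - s by linarith), abs_of_neg hα]
      norm_num
    · simp [hα] at h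
    · rw [Real.sign_of_pos hα] at h ⊢
      rw [abs_of_neg (show t - s < 0 by linarith), abs_of_pos hα]
      norm_num
      linarith
  · simp only [norm_zero]; positivity

lemma enorm_gker_le (ω : ℂ) (t s : ℝ) :
    ‖gker ω t s‖ₑ ≤ expKernel |ω.re| (t - s) := by
  rw [← ofReal_norm]
  exact ENNReal.ofReal_le_ofReal (norm_gker_le ω t s)

lemma Iop_le_expConv (ω : ℂ) (r : ℝ → ℂ) (t : ℝ) :
    Iop ω r t ≤ expConv |ω.re| (fun s => ‖r s‖ₑ) t :=
  lintegral_mono fun s => by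
    rw [← enorm_eq_nnnorm, enorm_mul]
    exact mul_le_mul_left (enorm_gker_le ω t s) _

lemma Iop_neg (ω : ℂ) (r : ℝ → ℂ) (t : ℝ) :
    Iop ω r (-t) = Iop (-ω) (fun s => r (-s)) t := by
  rw [Iop, ← lintegral_neg_eq_self]
  simp only [Iop, gker_neg_neg, neg_mul, nnnorm_neg]

end Green

section Continuity

open ContinuousLinearMap
open scoped Convolution

lemma measurable_gker (ω : ℂ) : Measurable fun u => gker ω u 0 := by
  unfold gker
  exact Measurable.ite (measurableSet_lt (by fun_prop) (by fun_prop)) (by fun_prop) (by fun_prop)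

lemma integrable_norm_gker (hω : ω.re ≠ 0) : Integrable fun u => ‖gker ω u 0‖ :=
  (integrable_exp_neg_mul_abs (abs_pos.2 hω)).mono' (measurable_gker ω).norm.aestronglyMeasurable
    (ae_of_all _ fun u => by simpa using norm_gker_le ω u 0)

lemma continuous_toReal_Iop (hω : ω.re ≠ 0) (hr : Continuous r) {C : ℝ}
    (hC : ∀ t, ‖r t‖ ≤ C) :
    Continuous fun t => (Iop ω r t).toReal := by
  have hconv : (fun t => (Iop ω r t).toReal)
      = (fun u => ‖gker ω u 0‖) ⋆[lsmul ℝ ℝ, volume] fun s => ‖r s‖ := by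
    ext t
    have hmeas : Measurable fun s => gker ω t s * r s := by
      simp_rw [gker_eq_sub ω t]
      exact ((measurable_gker ω).comp (by fun_prop)).mul hr.measurable
    simp_rw [convolution_lsmul_swap, Iop, ← enorm_eq_nnnorm,
      ← integral_norm_eq_lintegral_enorm hmeas.aestronglyMeasurable, norm_mul, smul_eq_mul,
      ← gker_eq_sub]
  rw [hconv]
  exact BddAbove.continuous_convolution_right_of_integrable _
    ⟨C, by rintro _ ⟨t, rfl⟩; simpa using hC t⟩ (integrable_norm_gker hω) hr.norm

end Continuity

lemma setLIntegral_Ioi_comp_neg (f : ℝ → ℝ≥0∞) :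
    ∫⁻ x in Ioi 0, f (-x) = ∫⁻ x in Iic 0, f x := by
  rw [(Measure.measurePreserving_neg volume).setLIntegral_comp_emb
    (Homeomorph.neg ℝ).measurableEmbedding, image_neg_Ioi, neg_zero,
    Measure.restrict_congr_set Iio_ae_eq_Iic]

lemma BCb.exists_enorm_le (hr : BCb r) :
    ∃ C : ℝ≥0∞, C ≠ ⊤ ∧ ∀ s, ‖r s‖ₑ ≤ C := by
  obtain ⟨-, c, hc⟩ := hr
  exact ⟨ENNReal.ofReal c, ENNReal.ofReal_ne_top, fun s => by
    rw [← ofReal_norm]; exact ENNReal.ofReal_le_ofReal (hc s)⟩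

lemma BCb.comp_neg (hr : BCb r) : BCb fun s => r (-s) := by
  obtain ⟨hc, c, hrc⟩ := hr
  exact ⟨hc.comp continuous_neg, c, fun s => hrc (-s)⟩

section Iop

variable {γ : ℂ} {r : ℝ → ℂ} {p : ℝ}

lemma Iop_eq_comp_neg (γ : ℂ) (r : ℝ → ℂ) :
    Iop γ r = fun t => Iop (-γ) (fun s => r (-s)) (-t) := by
  ext t
  rw [← Iop_neg, neg_neg]

lemma exists_Iop_le (hγ : γ.re ≠ 0) (hr : BCb r) :
    ∃ C : ℝ≥0∞, C ≠ ⊤ ∧ ∀ t, Iop γ r t ≤ C := by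
  obtain ⟨C, hC, hrC⟩ := hr.exists_enorm_le
  exact ⟨C * ∫⁻ u, expKernel |γ.re| u,
    ENNReal.mul_ne_top hC (lintegral_expKernel_lt_top (abs_pos.2 hγ)).ne,
    fun t => (Iop_le_expConv γ r t).trans (expConv_le_mul hrC t)⟩

lemma BCb_toReal_Iop (hγ : γ.re ≠ 0) (hr : BCb r) :
    BCb fun t => (((Iop γ r t).toReal : ℝ) : ℂ) := by
  obtain ⟨C, hC, hIC⟩ := exists_Iop_le hγ hr
  obtain ⟨hrc, c, hc⟩ := hr
  refine ⟨Complex.continuous_ofReal.comp (continuous_toReal_Iop hγ hrc hc), C.toReal,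
    fun t => ?_⟩
  rw [Complex.norm_real, Real.norm_eq_abs, abs_of_nonneg ENNReal.toReal_nonneg]
  exact ENNReal.toReal_mono hC (hIC t)

lemma tendsto_Iop_atTop (hγ : γ.re ≠ 0) (hr : BCb r) (hlim : Tendsto r atTop (𝓝 0)) :
    Tendsto (Iop γ r) atTop (𝓝 0) := by
  obtain ⟨C, hC, hrC⟩ := hr.exists_enorm_le
  have hρ : Tendsto (fun s => ‖r s‖ₑ) atTop (𝓝 0) := by
    simpa [Function.comp_def] using (continuous_enorm.tendsto 0).comp hlim
  exact tendsto_of_tendsto_of_tendsto_of_le_of_le tendsto_const_nhds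
    (tendsto_expConv_of_tendsto (abs_pos.2 hγ) hr.1.measurable.enorm hC hrC hρ)
    (fun _ => zero_le) (Iop_le_expConv γ r)

lemma tendsto_Iop_atTop_of_lintegral_Ioi (hγ : γ.re ≠ 0) (hr : BCb r) (hp : 1 ≤ p)
    (hint : ∫⁻ s in Ioi 0, (‖r s‖₊ : ℝ≥0∞) ^ p < ⊤) :
    Tendsto (Iop γ r) atTop (𝓝 0) := by
  obtain ⟨C, hC, hrC⟩ := hr.exists_enorm_le
  exact tendsto_of_tendsto_of_tendsto_of_le_of_le tendsto_const_nhds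
    (tendsto_expConv_of_lintegral_Ioi_rpow_ne_top (abs_pos.2 hγ) hp hr.1.measurable.enorm hC hrC
      hint.ne)
    (fun _ => zero_le) (Iop_le_expConv γ r)

lemma lintegral_Ioi_Iop_rpow_lt_top (hγ : γ.re ≠ 0) (hr : BCb r) (hp : 1 ≤ p)
    (hint : ∫⁻ s in Ioi 0, (‖r s‖₊ : ℝ≥0∞) ^ p < ⊤) :
    ∫⁻ t in Ioi 0, Iop γ r t ^ p < ⊤ := by
  obtain ⟨C, hC, hrC⟩ := hr.exists_enorm_le
  refine lt_of_le_of_lt (lintegral_mono fun t => ?_)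
    (lintegral_Ioi_expConv_rpow_lt_top (abs_pos.2 hγ) hp hr.1.measurable.enorm hC hrC hint.ne)
  exact ENNReal.rpow_le_rpow (Iop_le_expConv γ r t) (by linarith)

lemma lintegral_Iop_rpow_lt_top (hγ : γ.re ≠ 0) (hr : Measurable r) (hp : 1 ≤ p)
    (hint : ∫⁻ s, (‖r s‖₊ : ℝ≥0∞) ^ p < ⊤) :
    ∫⁻ t, Iop γ r t ^ p < ⊤ := by
  have hM := lintegral_expKernel_lt_top (abs_pos.2 hγ)
  calc ∫⁻ t, Iop γ r t ^ p ≤ ∫⁻ t, expConv |γ.re| (fun s => ‖r s‖ₑ) t ^ p :=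
        lintegral_mono fun t => ENNReal.rpow_le_rpow (Iop_le_expConv γ r t) (by linarith)
    _ ≤ _ := lintegral_expConv_rpow_le hp hr.enorm
    _ < ⊤ := ENNReal.mul_lt_top (ENNReal.rpow_lt_top_of_nonneg (by linarith) hM.ne)
        (ENNReal.mul_lt_top hM hint)

lemma tendsto_Iop_atBot (hγ : γ.re ≠ 0) (hr : BCb r) (hlim : Tendsto r atBot (𝓝 0)) :
    Tendsto (Iop γ r) atBot (𝓝 0) := by
  rw [Iop_eq_comp_neg]
  exact (tendsto_Iop_atTop (by simpa using hγ) hr.comp_neg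
    (hlim.comp tendsto_neg_atTop_atBot)).comp tendsto_neg_atBot_atTop

lemma tendsto_Iop_atBot_of_lintegral_Iic (hγ : γ.re ≠ 0) (hr : BCb r) (hp : 1 ≤ p)
    (hint : ∫⁻ s in Iic 0, (‖r s‖₊ : ℝ≥0∞) ^ p < ⊤) :
    Tendsto (Iop γ r) atBot (𝓝 0) := by
  rw [Iop_eq_comp_neg]
  rw [← setLIntegral_Ioi_comp_neg] at hint
  exact (tendsto_Iop_atTop_of_lintegral_Ioi (by simpa using hγ) hr.comp_neg hp hint).comp
    tendsto_neg_atBot_atTop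

lemma lintegral_Iic_Iop_rpow_lt_top (hγ : γ.re ≠ 0) (hr : BCb r) (hp : 1 ≤ p)
    (hint : ∫⁻ s in Iic 0, (‖r s‖₊ : ℝ≥0∞) ^ p < ⊤) :
    ∫⁻ t in Iic 0, Iop γ r t ^ p < ⊤ := by
  rw [← setLIntegral_Ioi_comp_neg] at hint ⊢
  simp only [Iop_neg]
  exact lintegral_Ioi_Iop_rpow_lt_top (by simpa using hγ) hr.comp_neg hp hint

end Iop

lemma tendsto_ofReal_toReal_of_tendsto_zero {l : Filter ℝ} {u : ℝ → ℝ≥0∞}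
    (h : Tendsto u l (𝓝 0)) : Tendsto (fun t => (((u t).toReal : ℝ) : ℂ)) l (𝓝 0) := by
  simpa [Function.comp_def] using (Complex.continuous_ofReal.tendsto 0).comp
    ((ENNReal.tendsto_toReal ENNReal.zero_ne_top).comp h)

lemma enorm_toReal {x : ℝ≥0∞} (hx : x ≠ ⊤) : (‖x.toReal‖₊ : ℝ≥0∞) = x := by
  rw [← enorm_eq_nnnorm, Real.enorm_of_nonneg ENNReal.toReal_nonneg, ENNReal.ofReal_toReal hx]

lemma enorm_ofReal_toReal {x : ℝ≥0∞} (hx : x ≠ ⊤) :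
    (‖((x.toReal : ℝ) : ℂ)‖₊ : ℝ≥0∞) = x := by
  rw [← enorm_eq_nnnorm, ← ofReal_norm, Complex.norm_real, ofReal_norm]
  exact enorm_toReal hx

/-- Mapping properties of `I_α` (`α = Re γ ≠ 0`) on the spaces
`BC_0`, `C_00`, `L^p_0`, `L^p(ℝ)` and `L^p(-∞,0]`. -/
theorem stmt2 (γ : ℂ) (hγ : γ.re ≠ 0) (p : ℝ) (hp : 1 ≤ p)
    (r : ℝ → ℂ) (hr : BCb r) :
    (BC0 r → BC0 (fun t => (((Iop γ r t).toReal : ℝ) : ℂ))) ∧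
    (C00 r → C00 (fun t => (((Iop γ r t).toReal : ℝ) : ℂ))) ∧
    (Lp0 p r → BC0 (fun t => (((Iop γ r t).toReal : ℝ) : ℂ)) ∧
      Lp0 p (fun t => (((Iop γ r t).toReal : ℝ) : ℂ))) ∧
    (LpR p r → C00 (fun t => (((Iop γ r t).toReal : ℝ) : ℂ)) ∧
      LpR p (fun t => (((Iop γ r t).toReal : ℝ) : ℂ))) ∧
    ((∫⁻ s in Set.Iic (0:ℝ), (‖r s‖₊ : ℝ≥0∞) ^ p) < ⊤ →
      Tendsto (fun t => (Iop γ r t).toReal) atBot (nhds 0) ∧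
      (∫⁻ s in Set.Iic (0:ℝ), (‖(Iop γ r s).toReal‖₊ : ℝ≥0∞) ^ p) < ⊤) := by
  have hBC := BCb_toReal_Iop hγ hr
  have ⟨_, c, hc⟩ := hBC
  obtain ⟨C, hC, hIC⟩ := exists_Iop_le hγ hr
  have hfin : ∀ t, Iop γ r t ≠ ⊤ := fun t => ne_top_of_le_ne_top hC (hIC t)
  refine ⟨fun ⟨_, htop⟩ => ⟨hBC, ?_⟩, fun ⟨⟨_, htop⟩, hbot⟩ => ⟨⟨hBC, ?_⟩, ?_⟩,
    fun ⟨_, hint⟩ => ⟨⟨hBC, ?_⟩, ⟨c, fun t _ => hc t⟩, ?_⟩,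
    fun hint => ?_, fun hint => ⟨?_, ?_⟩⟩
  · exact tendsto_ofReal_toReal_of_tendsto_zero (tendsto_Iop_atTop hγ hr htop)
  · exact tendsto_ofReal_toReal_of_tendsto_zero (tendsto_Iop_atTop hγ hr htop)
  · exact tendsto_ofReal_toReal_of_tendsto_zero (tendsto_Iop_atBot hγ hr hbot)
  · exact tendsto_ofReal_toReal_of_tendsto_zero (tendsto_Iop_atTop_of_lintegral_Ioi hγ hr hp hint)
  · simpa only [enorm_ofReal_toReal (hfin _)] using lintegral_Ioi_Iop_rpow_lt_top hγ hr hp hint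
  · have hIoi := (setLIntegral_le_lintegral (Ioi 0) _).trans_lt hint
    have hIic := (setLIntegral_le_lintegral (Iic 0) _).trans_lt hint
    refine ⟨⟨⟨hBC, tendsto_ofReal_toReal_of_tendsto_zero
      (tendsto_Iop_atTop_of_lintegral_Ioi hγ hr hp hIoi)⟩,
      tendsto_ofReal_toReal_of_tendsto_zero
        (tendsto_Iop_atBot_of_lintegral_Iic hγ hr hp hIic)⟩, ?_⟩
    simpa only [LpR, enorm_ofReal_toReal (hfin _)] using
      lintegral_Iop_rpow_lt_top hγ hr.1.measurable hp hint
  · exact (ENNReal.tendsto_toReal ENNReal.zero_ne_top).comp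
      (tendsto_Iop_atBot_of_lintegral_Iic hγ hr hp hint)
  · simpa only [enorm_toReal (hfin _)] using lintegral_Iic_Iop_rpow_lt_top hγ hr hp hint

end
end

section
/- Let n ≥ 2. If R ∈ AP(ℝ×ℂ^{n−1}) and z_0, …, z_{n−2} : ℝ → ℂ are almost periodic, then the map t ↦ R(t, z_0(t), …, z_{n−2}(t)) is almost periodic. The same conclusion holds with AP replaced throughout by AAP, and with AP replaced throughout by AAP_0. -/
open MeasureTheory Filter Topology
open scoped ENNReal NNReal

noncomputable section

/-! An almost periodic `R(t, Z)` is uniformly equicontinuous in `Z` on compact sets, uniformly in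
`t`: a sequence of translates violating this would have a subsequence converging uniformly on the
compact set, and the limit is uniformly continuous there. Given shifts `bₖ`, extract a subsequence
along which `R(· + bₖ, ·)` converges uniformly on `ℝ × K`, then a further one along which every
`zᵢ(· + bₖ)` converges uniformly; equicontinuity lets the limit pass inside the composition.
For the asymptotic classes write `R = Φ + h` and `z = w + g`: then `R(t, z) = Φ(t, w) + ρ(t)` with
`Φ(t, w)` almost periodic, and `ρ(t) = Φ(t, z) - Φ(t, w) + h(t, z)` decays wherever `g` and `h` do,
again by equicontinuity. -/

open scoped Uniformity

section UniformConvergence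

variable {ι κ α X β : Type*}

theorem Finset.exists_strictMono_forall (s : Finset ι) (P : ι → (ℕ → ℕ) → Prop)
    (hP : ∀ i ψ φ, StrictMono φ → P i ψ → P i (ψ ∘ φ))
    (hex : ∀ i ∈ s, ∀ ψ : ℕ → ℕ, ∃ φ, StrictMono φ ∧ P i (ψ ∘ φ)) :
    ∃ φ, StrictMono φ ∧ ∀ i ∈ s, P i φ := by
  classical
  induction s using Finset.induction_on with
  | empty => exact ⟨id, strictMono_id, by simp⟩
  | insert j s _ ih =>
    obtain ⟨ψ, hψ, hs⟩ := ih fun i hi => hex i (Finset.mem_insert_of_mem hi)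
    obtain ⟨φ, hφ, hj⟩ := hex j (Finset.mem_insert_self j s) ψ
    exact ⟨ψ ∘ φ, hψ.comp hφ, Finset.forall_mem_insert .. |>.2
      ⟨hj, fun i hi => hP i ψ φ hφ (hs i hi)⟩⟩

theorem TendstoUniformly.comp_tendsto [UniformSpace β] {F : ι → α → β} {f : α → β}
    {p : Filter ι} (h : TendstoUniformly F f p) {φ : κ → ι} {q : Filter κ}
    (hφ : Tendsto φ q p) : TendstoUniformly (fun k => F (φ k)) f q :=
  fun U hU => hφ.eventually (h U hU)

theorem TendstoUniformlyOn.comp_tendsto [UniformSpace β] {F : ι → α → β} {f : α → β}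
    {p : Filter ι} {s : Set α} (h : TendstoUniformlyOn F f p s) {φ : κ → ι} {q : Filter κ}
    (hφ : Tendsto φ q p) : TendstoUniformlyOn (fun k => F (φ k)) f q s :=
  fun U hU => hφ.eventually (h U hU)

theorem tendstoUniformly_pi_iff {δ : α → Type*} [∀ a, UniformSpace (δ a)]
    {F : ι → X → ∀ a, δ a} {f : X → ∀ a, δ a} {p : Filter ι} :
    TendstoUniformly F f p ↔ ∀ a, TendstoUniformly (fun i x => F i x a) (fun x => f x a) p := by
  simp only [tendstoUniformly_iff_tendsto, Pi.uniformity, tendsto_iInf, tendsto_comap_iff]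
  rfl

theorem TendstoUniformlyOn.tendsto_uniformity_comp [UniformSpace β] {F : ι → α → β}
    {f : α → β} {p : Filter ι} {s : Set α} (h : TendstoUniformlyOn F f p s) {g : ι → α}
    (hg : ∀ᶠ i in p, g i ∈ s) : Tendsto (fun i => (f (g i), F i (g i))) p (𝓤 β) :=
  (tendstoUniformlyOn_iff_tendsto.1 h).comp (tendsto_id.prodMk (tendsto_principal.2 hg))

theorem tendsto_uniformity_iff_tendsto_sub [UniformSpace β] [AddGroup β] [IsUniformAddGroup β]
    {l : Filter ι} {f g : ι → β} :
    Tendsto (fun i => (f i, g i)) l (𝓤 β) ↔ Tendsto (fun i => g i - f i) l (𝓝 0) := by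
  rw [uniformity_eq_comap_nhds_zero β, tendsto_comap_iff]
  rfl

end UniformConvergence

section Equicontinuity

variable {ι α X β : Type*} [UniformSpace X] [UniformSpace β]

theorem UniformEquicontinuousOn.tendsto_uniformity_comp {F : ι → X → β} {K : Set X}
    (hF : UniformEquicontinuousOn F K) {l : Filter ι} {z w : ι → X} (hz : ∀ i, z i ∈ K)
    (hw : ∀ i, w i ∈ K) (hzw : Tendsto (fun i => (z i, w i)) l (𝓤 X)) :
    Tendsto (fun i => (F i (z i), F i (w i))) l (𝓤 β) := fun U hU =>
  ((tendsto_inf.2 ⟨hzw, tendsto_principal.2 (.of_forall fun i => Set.mk_mem_prod (hz i) (hw i))⟩).eventually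
    (hF U hU)).mono fun i hi => hi i

theorem uniformEquicontinuousOn_of_exists_tendstoUniformlyOn [(𝓤 X).IsCountablyGenerated]
    {F : ι → X → β} {K : Set X} (hK : IsCompact K) (hF : ∀ i, ContinuousOn (F i) K)
    (hseq : ∀ t : ℕ → ι, ∃ φ : ℕ → ℕ, StrictMono φ ∧ ∃ G : X → β,
      TendstoUniformlyOn (fun k => F (t (φ k))) G atTop K) :
    UniformEquicontinuousOn F K := by
  intro U hU
  by_contra hbad
  obtain ⟨xy, hxy, hxyK⟩ := frequently_iff_seq_forall.1 <|
    Eventually.and_frequently (mem_inf_of_right (mem_principal_self (K ×ˢ K)))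
      (not_eventually.1 hbad)
  choose t ht using fun k => not_forall.1 (hxyK k).2
  obtain ⟨φ, hφ, G, hG⟩ := hseq t
  have hGc : UniformContinuousOn G K :=
    hK.uniformContinuousOn_of_continuous (hG.continuousOn (.of_forall fun k => hF _))
  have hGxy := Tendsto.comp hGc (hxy.comp hφ.tendsto_atTop)
  have hx := hG.tendsto_uniformity_comp (.of_forall fun k => (Set.mem_prod.1 (hxyK (φ k)).1).1)
  have hy := hG.tendsto_uniformity_comp (.of_forall fun k => (Set.mem_prod.1 (hxyK (φ k)).1).2)
  obtain ⟨k, hk⟩ := ((hx.uniformity_symm.uniformity_trans hGxy).uniformity_trans hy).eventually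
    hU |>.exists
  exact ht (φ k) hk

theorem TendstoUniformlyOn.tendstoUniformly_comp_of_uniformEquicontinuousOn {p : Filter ι}
    {F : ι → α → X → β} {G : α → X → β} {K : Set X}
    (hF : TendstoUniformlyOn (fun i (q : α × X) => F i q.1 q.2) (fun q => G q.1 q.2) p
      (Set.univ ×ˢ K))
    (hequi : UniformEquicontinuousOn (fun ia : ι × α => F ia.1 ia.2) K)
    {Z : ι → α → X} {W : α → X} (hZ : TendstoUniformly Z W p) (hZK : ∀ i a, Z i a ∈ K)
    (hWK : ∀ a, W a ∈ K) :
    TendstoUniformly (fun i a => F i a (Z i a)) (fun a => G a (W a)) p := by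
  rw [tendstoUniformly_iff_tendsto] at hZ ⊢
  have hW : Tendsto (fun ia : ι × α => (ia.1, (ia.2, W ia.2))) (p ×ˢ ⊤)
      (p ×ˢ 𝓟 (Set.univ ×ˢ K)) :=
    tendsto_fst.prodMk (tendsto_principal.2 (.of_forall fun ia => ⟨trivial, hWK ia.2⟩))
  have hlim : Tendsto (fun ia : ι × α => (G ia.2 (W ia.2), F ia.1 ia.2 (W ia.2)))
      (p ×ˢ ⊤) (𝓤 β) :=
    (tendstoUniformlyOn_iff_tendsto.1 hF).comp hW
  exact hlim.uniformity_trans <|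
    hequi.tendsto_uniformity_comp (fun ia => hWK ia.2) (fun ia => hZK ia.1 ia.2) hZ

end Equicontinuity

theorem exists_forall_norm_pi_le {ι α E : Type*} [Fintype ι] [SeminormedAddCommGroup E]
    {z : ι → α → E} (hz : ∀ i, ∃ C, ∀ t, ‖z i t‖ ≤ C) : ∃ C, ∀ t, ‖fun i => z i t‖ ≤ C := by
  choose C hC using hz
  obtain ⟨M, hM⟩ := Finite.exists_le C
  exact ⟨max M 0, fun t => (pi_norm_le_iff_of_nonneg (le_max_right _ _)).2 fun i =>
    (hC i t).trans ((hM i).trans (le_max_left _ _))⟩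

theorem continuous_comp_pi {m : ℕ} {R : ℝ → (Fin m → ℂ) → ℂ}
    (hR : Continuous fun p : ℝ × (Fin m → ℂ) => R p.1 p.2) {z : Fin m → ℝ → ℂ}
    (hz : ∀ i, Continuous (z i)) : Continuous fun t => R t (fun i => z i t) :=
  hR.comp (continuous_id.prodMk (continuous_pi hz))

theorem AP.bounded {f : ℝ → ℂ} (hf : AP f) : ∃ C, ∀ t, ‖f t‖ ≤ C := by
  by_contra! h
  choose b hb using fun k : ℕ => h k
  obtain ⟨φ, hφ, g, hg⟩ := hf.2 b
  have hconv : Tendsto (fun k => ‖f (0 + b (φ k))‖) atTop (𝓝 ‖g 0‖) := (hg.tendsto_at 0).norm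
  refine not_tendsto_atTop_of_tendsto_nhds hconv <|
    tendsto_atTop_mono (fun k => ?_) tendsto_natCast_atTop_atTop
  calc (k : ℝ) ≤ φ k := by exact_mod_cast hφ.id_le k
    _ ≤ ‖f (0 + b (φ k))‖ := by rw [zero_add]; exact (hb (φ k)).le

theorem AP.exists_strictMono_tendstoUniformly_pi {m : ℕ} {z : Fin m → ℝ → ℂ}
    (hz : ∀ i, AP (z i)) (b : ℕ → ℝ) : ∃ φ : ℕ → ℕ, StrictMono φ ∧ ∃ W : ℝ → Fin m → ℂ,
      TendstoUniformly (fun k t i => z i (t + b (φ k))) W atTop := by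
  obtain ⟨φ, hφ, hconv⟩ := Finset.univ.exists_strictMono_forall
    (fun i φ => ∃ g, TendstoUniformly (fun k t => z i (t + b (φ k))) g atTop)
    (fun i ψ φ hφ ⟨g, hg⟩ => ⟨g, hg.comp_tendsto hφ.tendsto_atTop⟩)
    (fun i _ ψ => (hz i).2 (b ∘ ψ))
  choose g hg using fun i => hconv i (Finset.mem_univ i)
  exact ⟨φ, hφ, fun t i => g i t, tendstoUniformly_pi_iff.2 hg⟩

theorem APm.uniformEquicontinuousOn {m : ℕ} {F : ℝ → (Fin m → ℂ) → ℂ} (hF : APm m F)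
    {K : Set (Fin m → ℂ)} (hK : IsCompact K) : UniformEquicontinuousOn F K := by
  refine uniformEquicontinuousOn_of_exists_tendstoUniformlyOn hK
    (fun t => (hF.1.comp (Continuous.prodMk_right t)).continuousOn) fun t => ?_
  obtain ⟨φ, hφ, G, hG⟩ := hF.2 t
  refine ⟨φ, hφ, G 0, ?_⟩
  simpa only [Function.comp_def, zero_add] using ((hG K hK).comp fun x => ((0 : ℝ), x)).mono fun x hx => ⟨trivial, hx⟩

theorem APm.comp {m : ℕ} {R : ℝ → (Fin m → ℂ) → ℂ} (hR : APm m R) {z : Fin m → ℝ → ℂ}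
    (hz : ∀ i, AP (z i)) : AP fun t => R t (fun i => z i t) := by
  refine ⟨continuous_comp_pi hR.1 fun i => (hz i).1, fun b => ?_⟩
  obtain ⟨C, hC⟩ := exists_forall_norm_pi_le fun i => (hz i).bounded
  have hK := isCompact_closedBall (0 : Fin m → ℂ) C
  obtain ⟨φ₁, hφ₁, G, hG⟩ := hR.2 b
  obtain ⟨φ₂, hφ₂, W, hW⟩ := AP.exists_strictMono_tendstoUniformly_pi hz (b ∘ φ₁)
  have hZK : ∀ k t, (fun i => z i (t + b (φ₁ (φ₂ k)))) ∈ Metric.closedBall 0 C :=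
    fun k t => mem_closedBall_zero_iff.2 (hC _)
  have hWK : ∀ t, W t ∈ Metric.closedBall 0 C := fun t =>
    Metric.isClosed_closedBall.mem_of_tendsto (hW.tendsto_at t) (.of_forall fun k => hZK k t)
  exact ⟨φ₁ ∘ φ₂, hφ₁.comp hφ₂, fun t => G t (W t),
    ((hG _ hK).comp_tendsto hφ₂.tendsto_atTop).tendstoUniformly_comp_of_uniformEquicontinuousOn
      ((hR.uniformEquicontinuousOn hK).comp _) hW hZK hWK⟩

theorem APm.tendsto_comp_add_sub_comp {m : ℕ} {Φ h : ℝ → (Fin m → ℂ) → ℂ} (hΦ : APm m Φ)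
    {z w g : Fin m → ℝ → ℂ} (hz : ∀ i, BCb (z i)) (hw : ∀ i, AP (w i))
    (hzwg : ∀ i t, z i t = w i t + g i t) {l : Filter ℝ}
    (hh : ∀ K, IsCompact K → TendstoUniformlyOn h 0 l K) (hg : ∀ i, Tendsto (g i) l (𝓝 0)) :
    Tendsto (fun t => Φ t (fun i => z i t) + h t (fun i => z i t) - Φ t (fun i => w i t))
      l (𝓝 0) := by
  obtain ⟨C, hC⟩ := exists_forall_norm_pi_le fun i => (hz i).2
  obtain ⟨C', hC'⟩ := exists_forall_norm_pi_le fun i => (hw i).bounded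
  have hK := isCompact_closedBall (0 : Fin m → ℂ) (max C C')
  have hzK : ∀ t, (fun i => z i t) ∈ Metric.closedBall 0 (max C C') :=
    fun t => mem_closedBall_zero_iff.2 ((hC t).trans (le_max_left _ _))
  have hwK : ∀ t, (fun i => w i t) ∈ Metric.closedBall 0 (max C C') :=
    fun t => mem_closedBall_zero_iff.2 ((hC' t).trans (le_max_right _ _))
  have hzw : Tendsto (fun t => (fun i => z i t) - fun i => w i t) l (𝓝 0) :=
    tendsto_pi_nhds.2 fun i => (hg i).congr fun t => by simp [hzwg]
  have hΦzw := (hΦ.uniformEquicontinuousOn hK).tendsto_uniformity_comp hwK hzK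
    (tendsto_uniformity_iff_tendsto_sub.2 hzw)
  have hhz := (hh _ hK).tendsto_uniformity_comp (.of_forall hzK)
  simpa [add_sub_right_comm] using (tendsto_uniformity_iff_tendsto_sub.1 hΦzw).add
    (tendsto_uniformity_iff_tendsto_sub.1 hhz)

theorem AAPm.comp {m : ℕ} {R : ℝ → (Fin m → ℂ) → ℂ} (hR : AAPm m R) {z : Fin m → ℝ → ℂ}
    (hz : ∀ i, AAP (z i)) : AAP fun t => R t (fun i => z i t) := by
  obtain ⟨hRc, hRb, Φ, h, hRΦ, hΦ, hh⟩ := hR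
  choose w g hzwg hw hg using fun i => (hz i).2
  refine ⟨⟨continuous_comp_pi hRc fun i => (hz i).1.1, hRb.imp fun C hC t => hC _ _⟩,
    fun t => Φ t (fun i => w i t), _, fun t => (add_sub_cancel _ _).symm, hΦ.comp hw, ?_⟩
  simpa only [hRΦ] using hΦ.tendsto_comp_add_sub_comp (fun i => (hz i).1) hw hzwg hh hg

theorem AAP0m.comp {m : ℕ} {R : ℝ → (Fin m → ℂ) → ℂ} (hR : AAP0m m R) {z : Fin m → ℝ → ℂ}
    (hz : ∀ i, AAP0 (z i)) : AAP0 fun t => R t (fun i => z i t) := by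
  obtain ⟨hRc, hRb, Φ, h, hRΦ, hΦ, hhTop, hhBot⟩ := hR
  choose w g hzwg hw hgTop hgBot using fun i => (hz i).2
  refine ⟨⟨continuous_comp_pi hRc fun i => (hz i).1.1, hRb.imp fun C hC t => hC _ _⟩,
    fun t => Φ t (fun i => w i t), _, fun t => (add_sub_cancel _ _).symm, hΦ.comp hw, ?_, ?_⟩
  · simpa only [hRΦ] using hΦ.tendsto_comp_add_sub_comp (fun i => (hz i).1) hw hzwg hhTop hgTop
  · simpa only [hRΦ] using hΦ.tendsto_comp_add_sub_comp (fun i => (hz i).1) hw hzwg hhBot hgBot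

theorem stmt6_general (n : ℕ) :
    (∀ R : ℝ → (Fin (n-1) → ℂ) → ℂ, APm (n-1) R →
      ∀ z : Fin (n-1) → ℝ → ℂ, (∀ i, AP (z i)) →
        AP (fun t => R t (fun i => z i t))) ∧
    (∀ R : ℝ → (Fin (n-1) → ℂ) → ℂ, AAPm (n-1) R →
      ∀ z : Fin (n-1) → ℝ → ℂ, (∀ i, AAP (z i)) →
        AAP (fun t => R t (fun i => z i t))) ∧
    (∀ R : ℝ → (Fin (n-1) → ℂ) → ℂ, AAP0m (n-1) R →
      ∀ z : Fin (n-1) → ℝ → ℂ, (∀ i, AAP0 (z i)) →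
        AAP0 (fun t => R t (fun i => z i t))) :=
  ⟨fun _ hR _ hz => hR.comp hz, fun _ hR _ hz => hR.comp hz, fun _ hR _ hz => hR.comp hz⟩

/-- Superposition: composing an almost periodic (resp. asymptotically
almost periodic) function of `(t,Z)` with almost periodic (resp. AAP, AAP₀) functions
`z_0,…,z_{n-2}` yields a function of the same class. -/
theorem stmt6 (n : ℕ) (hn : 2 ≤ n) :
    (∀ R : ℝ → (Fin (n-1) → ℂ) → ℂ, APm (n-1) R →
      ∀ z : Fin (n-1) → ℝ → ℂ, (∀ i, AP (z i)) →
        AP (fun t => R t (fun i => z i t))) ∧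
    (∀ R : ℝ → (Fin (n-1) → ℂ) → ℂ, AAPm (n-1) R →
      ∀ z : Fin (n-1) → ℝ → ℂ, (∀ i, AAP (z i)) →
        AAP (fun t => R t (fun i => z i t))) ∧
    (∀ R : ℝ → (Fin (n-1) → ℂ) → ℂ, AAP0m (n-1) R →
      ∀ z : Fin (n-1) → ℝ → ℂ, (∀ i, AAP0 (z i)) →
        AAP0 (fun t => R t (fun i => z i t))) :=
  stmt6_general n

end
end
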